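/- arXiv:2310.12372 — 4 statements merged into one kernel-verified Lean document; each statement's English description precedes it below -/
import Mathlib

section
/- Let G = ZM(m,n,r) with gcd(m,n) = gcd(m, r−1) = 1 and r^n ≡ 1 (mod m), and let d = o_m(r). Then G is a complete group (trivial center and all automorphisms inner) if and only if φ(m) = n = d. -/
/-!
Write `M = |a|`, `N = |b|` and `d` for the order of `r` mod `M`. The element `b` acts on
`A = ⟨a⟩` by `x ↦ x ^ r`, and since `gcd(M, N) = 1` every element of `G` is `b ^ j * a ^ i` for a
unique `(j, i) ∈ ZMod N × ZMod M`, multiplied as in `ZMod M ⋊ ZMod N`.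

The element `b ^ d` is central, so a trivial centre forces `N = d`. Conversely, if `N = d`, an
element commuting with `a` has no `b`-part, and a power of `a` commuting with `b` is trivial
because `r - 1` is a unit mod `M`.

The elements of order dividing `M` are exactly those of `A`, so every automorphism maps
`a ↦ a ^ s` with `s` a unit mod `M`. Each unit `s` gives an automorphism `a ↦ a ^ s`, `b ↦ b`,
while inner automorphisms act on `A` by powers of `r`; so if all automorphisms are inner, `r`
generates `(ZMod M)ˣ`, i.e. `d = φ(M)`. Conversely, if `d = φ(M) = N`, an automorphism maps
`a ↦ a ^ (r ^ k)` and, by the defining relation, `b ↦ b * a ^ i`: it is conjugation by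
`a ^ t * b ^ (-k)` where `t * (r - 1) = i` mod `M`.
-/

open Subgroup

namespace ZM

theorem isUnit_natCast_sub_one {m r : ℕ} (h : m.Coprime (r - 1)) : IsUnit ((r : ZMod m) - 1) := by
  cases r with
  | zero =>
    have : Subsingleton (ZMod m) := by
      rw [(Nat.coprime_zero_right m).mp h]
      infer_instance
    exact isUnit_of_subsingleton _
  | succ r => simpa using (ZMod.isUnit_iff_coprime r m).mpr h.symm

theorem orderOf_eq_totient_iff {n : ℕ} [NeZero n] {x : ZMod n} (hx : IsUnit x) :
    orderOf x = n.totient ↔ ∀ u : (ZMod n)ˣ, ∃ k : ℕ, x ^ k = u := by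
  rw [← hx.unit_spec, orderOf_units, ← ZMod.card_units_eq_totient, ← Nat.card_eq_fintype_card]
  constructor
  · intro h u
    have htop : zpowers hx.unit = ⊤ := (card_eq_iff_eq_top _).mp (by rw [Nat.card_zpowers, h])
    obtain ⟨k, hk⟩ := mem_powers_iff_mem_zpowers.mpr (htop ▸ mem_top u)
    exact ⟨k, by rw [← hk, Units.val_pow_eq_pow_val]⟩
  · intro h
    refine orderOf_eq_card_of_forall_mem_powers fun u => ?_
    obtain ⟨k, hk⟩ := h u
    exact ⟨k, Units.ext (by rw [Units.val_pow_eq_pow_val, hk])⟩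

section Group

variable {G : Type*} [Group G] {a b : G} {r : ℕ}

theorem pow_eq_pow_iff_natCast_eq {i j : ℕ} : a ^ i = a ^ j ↔ (i : ZMod (orderOf a)) = j :=
  pow_eq_pow_iff_modEq.trans (ZMod.natCast_eq_natCast_iff _ _ _).symm

theorem pow_val_natCast (i : ℕ) : a ^ (i : ZMod (orderOf a)).val = a ^ i := by
  rw [ZMod.val_natCast, pow_mod_orderOf]

theorem mem_center_iff_of_closure_pair (hgen : closure {a, b} = ⊤) {g : G} :
    g ∈ center G ↔ Commute a g ∧ Commute b g := by
  rw [← centralizer_univ, ← coe_top, ← hgen, centralizer_closure, mem_centralizer_iff]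
  simp only [Set.mem_insert_iff, Set.mem_singleton_iff, forall_eq_or_imp, forall_eq]
  rfl

theorem ext_of_closure_pair (hgen : closure {a, b} = ⊤) {φ ψ : G ≃* G} (ha : φ a = ψ a)
    (hb : φ b = ψ b) : φ = ψ :=
  MulEquiv.toMonoidHom_injective <| MonoidHom.eq_of_eqOn_dense hgen <| by
    rintro _ (rfl | rfl)
    exacts [ha, hb]

theorem inv_pow_mul_pow_mul_pow (h : b⁻¹ * a * b = a ^ r) (i j : ℕ) :
    (b ^ j)⁻¹ * a ^ i * b ^ j = a ^ (i * r ^ j) := by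
  induction j generalizing i with
  | zero => simp
  | succ j ih =>
    have hb : b⁻¹ * a ^ i * b = a ^ (i * r) := by
      have := conj_pow (a := b⁻¹) (b := a) (i := i)
      rw [inv_inv] at this
      rw [← this, h, ← pow_mul, mul_comm]
    calc (b ^ (j + 1))⁻¹ * a ^ i * b ^ (j + 1) = (b ^ j)⁻¹ * (b⁻¹ * a ^ i * b) * b ^ j := by
          rw [pow_succ']
          group
      _ = a ^ (i * r ^ (j + 1)) := by rw [hb, ih, pow_succ', mul_assoc]

theorem pow_mul_pow_eq (h : b⁻¹ * a * b = a ^ r) (i j : ℕ) :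
    a ^ i * b ^ j = b ^ j * a ^ (i * r ^ j) := by
  rw [← inv_pow_mul_pow_mul_pow h]
  group

theorem inv_mul_pow_mul (h : b⁻¹ * a * b = a ^ r) (i j k : ℕ) :
    (b ^ j * a ^ i)⁻¹ * a ^ k * (b ^ j * a ^ i) = a ^ (k * r ^ j) := by
  calc (b ^ j * a ^ i)⁻¹ * a ^ k * (b ^ j * a ^ i)
      = (a ^ i)⁻¹ * ((b ^ j)⁻¹ * a ^ k * b ^ j) * a ^ i := by group
    _ = a ^ (k * r ^ j) := by
      rw [inv_pow_mul_pow_mul_pow h, mul_assoc, (Commute.pow_pow_self a _ i).eq,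
        inv_mul_cancel_left]

theorem commute_pow_iff (h : b⁻¹ * a * b = a ^ r) (j : ℕ) :
    Commute (b ^ j) a ↔ (r : ZMod (orderOf a)) ^ j = 1 := by
  have := inv_pow_mul_pow_mul_pow h 1 j
  rw [pow_one, one_mul, mul_assoc, inv_mul_eq_iff_eq_mul] at this
  rw [Commute, SemiconjBy, this, mul_right_inj, eq_comm]
  simpa using pow_eq_pow_iff_natCast_eq (a := a) (i := r ^ j) (j := 1)

theorem natCast_pow_orderOf_eq_one (h : b⁻¹ * a * b = a ^ r) :
    (r : ZMod (orderOf a)) ^ orderOf b = 1 :=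
  (commute_pow_iff h _).mp (by rw [pow_orderOf_eq_one]; exact Commute.one_left a)

theorem pow_eq_one_of_commute (h : b⁻¹ * a * b = a ^ r) (hr : (orderOf a).Coprime (r - 1))
    {i : ℕ} (hc : Commute (a ^ i) b) : a ^ i = 1 := by
  have hi : a ^ (i * r) = a ^ i := by
    have := inv_pow_mul_pow_mul_pow h i 1
    rw [pow_one, pow_one] at this
    rw [← this, mul_assoc, hc.eq, inv_mul_cancel_left]
  rw [pow_eq_pow_iff_natCast_eq, Nat.cast_mul] at hi
  have : (i : ZMod (orderOf a)) * ((r : ZMod _) - 1) = 0 := by linear_combination hi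
  rw [← pow_zero a, pow_eq_pow_iff_natCast_eq, Nat.cast_zero]
  exact (isUnit_natCast_sub_one hr).mul_left_eq_zero.mp this

theorem pow_orderOf_natCast_mem_center (h : b⁻¹ * a * b = a ^ r) (hgen : closure {a, b} = ⊤) :
    b ^ orderOf (r : ZMod (orderOf a)) ∈ center G :=
  (mem_center_iff_of_closure_pair hgen).mpr
    ⟨((commute_pow_iff h _).mpr (pow_orderOf_eq_one _)).symm, Commute.self_pow b _⟩

theorem orderOf_eq_orderOf_natCast_of_center_eq_bot (h : b⁻¹ * a * b = a ^ r)
    (hgen : closure {a, b} = ⊤) (hZ : center G = ⊥) :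
    orderOf b = orderOf (r : ZMod (orderOf a)) :=
  Nat.dvd_antisymm
    (orderOf_dvd_of_pow_eq_one (by simpa [hZ] using pow_orderOf_natCast_mem_center h hgen))
    (orderOf_dvd_of_pow_eq_one (natCast_pow_orderOf_eq_one h))

/-- `a` and `b` generate `G = ZM(orderOf a, orderOf b, r)`. -/
structure IsZMPair (a b : G) (r : ℕ) : Prop where
  conj : b⁻¹ * a * b = a ^ r
  coprime : (orderOf a).Coprime (orderOf b)
  closure_eq_top : closure {a, b} = ⊤

noncomputable def coord (a b : G) (p : ZMod (orderOf b) × ZMod (orderOf a)) : G :=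
  b ^ p.1.val * a ^ p.2.val

theorem coord_natCast (j i : ℕ) : coord a b (j, i) = b ^ j * a ^ i := by
  simp only [coord, pow_val_natCast]

theorem coord_zero_one : coord a b (0, 1) = a := by
  simpa using coord_natCast (a := a) (b := b) 0 1

theorem coord_one_zero : coord a b (1, 0) = b := by
  simpa using coord_natCast (a := a) (b := b) 1 0

end Group

section Finite

variable {G : Type*} [Group G] [Finite G] {a b : G} {r : ℕ}

instance neZero_orderOf (x : G) : NeZero (orderOf x) := ⟨(orderOf_pos x).ne'⟩

theorem isUnit_natCast (h : b⁻¹ * a * b = a ^ r) : IsUnit (r : ZMod (orderOf a)) :=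
  IsUnit.of_pow_eq_one (natCast_pow_orderOf_eq_one h) (orderOf_pos b).ne'

theorem coord_mul (h : b⁻¹ * a * b = a ^ r) (p q : ZMod (orderOf b) × ZMod (orderOf a)) :
    coord a b p * coord a b q =
      coord a b (p.1 + q.1, p.2 * (r : ZMod (orderOf a)) ^ q.1.val + q.2) := by
  have key : ∀ j i l k : ℕ,
      coord a b (j, i) * coord a b (l, k) = coord a b ((j + l : ℕ), (i * r ^ l + k : ℕ)) := by
    intro j i l k
    simp only [coord_natCast, pow_add, mul_assoc]
    rw [← mul_assoc (a ^ i), pow_mul_pow_eq h, mul_assoc]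
  simpa only [ZMod.natCast_zmod_val, Nat.cast_add, Nat.cast_mul, Nat.cast_pow] using
    key p.1.val p.2.val q.1.val q.2.val

theorem coord_injective (hco : (orderOf a).Coprime (orderOf b)) :
    Function.Injective (coord a b) := by
  intro p q hpq
  have hdisj : Disjoint (zpowers b) (zpowers a) :=
    disjoint_of_coprime_natCard (by rw [Nat.card_zpowers, Nat.card_zpowers]; exact hco.symm)
  have := mul_injective_of_disjoint hdisj
    (a₁ := (⟨_, pow_mem (mem_zpowers b) p.1.val⟩, ⟨_, pow_mem (mem_zpowers a) p.2.val⟩))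
    (a₂ := (⟨_, pow_mem (mem_zpowers b) q.1.val⟩, ⟨_, pow_mem (mem_zpowers a) q.2.val⟩)) hpq
  simp only [Prod.mk.injEq, Subtype.mk.injEq, pow_eq_pow_iff_natCast_eq,
    ZMod.natCast_zmod_val] at this
  exact Prod.ext this.1 this.2

theorem coord_surjective (h : b⁻¹ * a * b = a ^ r) (hgen : closure {a, b} = ⊤) :
    Function.Surjective (coord a b) := by
  let S : Submonoid G :=
    { carrier := Set.range (coord a b)
      mul_mem' := by
        rintro _ _ ⟨p, rfl⟩ ⟨q, rfl⟩
        exact ⟨_, (coord_mul h p q).symm⟩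
      one_mem' := ⟨0, by simp [coord]⟩ }
  have hab : Submonoid.closure {a, b} ≤ S := by
    rw [Submonoid.closure_le, Set.insert_subset_iff, Set.singleton_subset_iff]
    exact ⟨⟨(0, 1), coord_zero_one⟩, ⟨(1, 0), coord_one_zero⟩⟩
  intro g
  apply hab
  rw [← closure_toSubmonoid_of_finite, hgen]
  trivial

theorem exists_eq_pow_mul_pow (h : b⁻¹ * a * b = a ^ r) (hgen : closure {a, b} = ⊤) (g : G) :
    ∃ j i : ℕ, g = b ^ j * a ^ i := by
  obtain ⟨p, rfl⟩ := coord_surjective h hgen g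
  exact ⟨p.1.val, p.2.val, rfl⟩

noncomputable def coordEquiv (hG : IsZMPair a b r) : ZMod (orderOf b) × ZMod (orderOf a) ≃ G :=
  Equiv.ofBijective (coord a b)
    ⟨coord_injective hG.coprime, coord_surjective hG.conj hG.closure_eq_top⟩

theorem center_eq_bot (h : b⁻¹ * a * b = a ^ r) (hgen : closure {a, b} = ⊤)
    (hr : (orderOf a).Coprime (r - 1)) (hd : orderOf (r : ZMod (orderOf a)) = orderOf b) :
    center G = ⊥ := by
  rw [eq_bot_iff]
  intro g hg
  obtain ⟨j, i, rfl⟩ := exists_eq_pow_mul_pow h hgen g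
  obtain ⟨hca, hcb⟩ := (mem_center_iff_of_closure_pair hgen).mp hg
  have hj : b ^ j = 1 := by
    have hcomm : Commute (b ^ j) a := by
      have := hca.eq
      rw [mul_assoc, ← (Commute.self_pow a i).eq, ← mul_assoc, ← mul_assoc] at this
      exact (mul_right_cancel this).symm
    rw [← orderOf_dvd_iff_pow_eq_one, ← hd]
    exact orderOf_dvd_of_pow_eq_one ((commute_pow_iff h j).mp hcomm)
  rw [hj, one_mul] at hcb ⊢
  rw [pow_eq_one_of_commute h hr hcb.symm]
  exact one_mem _

noncomputable def bExponent (hG : IsZMPair a b r) : G →* Multiplicative (ZMod (orderOf b)) :=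
  MonoidHom.mk' (fun g => Multiplicative.ofAdd ((coordEquiv hG).symm g).1) fun x y => by
    obtain ⟨p, rfl⟩ := (coordEquiv hG).surjective x
    obtain ⟨q, rfl⟩ := (coordEquiv hG).surjective y
    rw [show coordEquiv hG p * coordEquiv hG q = coordEquiv hG _ from coord_mul hG.conj p q]
    simp only [Equiv.symm_apply_apply, ofAdd_add]

theorem exists_eq_pow_of_pow_eq_one (hG : IsZMPair a b r) {x : G} (hx : x ^ orderOf a = 1) :
    ∃ s : ZMod (orderOf a), x = a ^ s.val := by
  obtain ⟨p, rfl⟩ := (coordEquiv hG).surjective x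
  have hp : p.1 = 0 := by
    have := congrArg (bExponent hG) hx
    rw [map_pow, map_one] at this
    have : (orderOf a : ZMod (orderOf b)) * p.1 = 0 := by
      simpa [bExponent, ← ofAdd_nsmul, nsmul_eq_mul] using this
    exact ((ZMod.isUnit_iff_coprime _ _).mpr hG.coprime).mul_right_eq_zero.mp this
  refine ⟨p.2, ?_⟩
  change coord a b p = _
  rw [coord, hp, ZMod.val_zero, pow_zero, one_mul]

theorem exists_apply_a_eq_pow (hG : IsZMPair a b r) (φ : G ≃* G) :
    ∃ u : (ZMod (orderOf a))ˣ, φ a = a ^ (u : ZMod (orderOf a)).val := by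
  have hM : ∀ ψ : G ≃* G, ψ a ^ orderOf a = 1 := fun ψ => by
    rw [← map_pow, pow_orderOf_eq_one, map_one]
  obtain ⟨s, hs⟩ := exists_eq_pow_of_pow_eq_one hG (hM φ)
  obtain ⟨t, ht⟩ := exists_eq_pow_of_pow_eq_one hG (hM φ.symm)
  have hst : a ^ (s.val * t.val) = a ^ 1 := by
    rw [pow_one, pow_mul, ← hs, ← map_pow, ← ht, MulEquiv.apply_symm_apply]
  rw [pow_eq_pow_iff_natCast_eq] at hst
  push_cast [ZMod.natCast_zmod_val] at hst
  exact ⟨Units.mkOfMulEqOne s t hst, hs⟩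

theorem exists_apply_b_eq_mul_pow (hG : IsZMPair a b r)
    (hd : orderOf (r : ZMod (orderOf a)) = orderOf b) (φ : G ≃* G) :
    ∃ i : ℕ, φ b = b * a ^ i := by
  obtain ⟨u, hu⟩ := exists_apply_a_eq_pow hG φ
  obtain ⟨j, i, hji⟩ := exists_eq_pow_mul_pow hG.conj hG.closure_eq_top (φ b)
  have hrel : (φ b)⁻¹ * φ a * φ b = φ a ^ r := by
    rw [← map_inv, ← map_mul, ← map_mul, hG.conj, map_pow]
  rw [hu, hji, inv_mul_pow_mul hG.conj, ← pow_mul, pow_eq_pow_iff_natCast_eq] at hrel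
  push_cast [ZMod.natCast_zmod_val] at hrel
  have hrj : (r : ZMod (orderOf a)) ^ j = r ^ 1 := by
    rw [pow_one]
    exact u.isUnit.mul_left_cancel hrel
  have hfin : IsOfFinOrder (r : ZMod (orderOf a)) := isOfFinOrder_iff_pow_eq_one.mpr
    ⟨_, orderOf_pos b, natCast_pow_orderOf_eq_one hG.conj⟩
  rw [hfin.pow_eq_pow_iff_modEq, hd, ← pow_eq_pow_iff_modEq, pow_one] at hrj
  exact ⟨i, by rw [hji, hrj]⟩

theorem exists_pow_conj_eq_mul_pow (h : b⁻¹ * a * b = a ^ r) (hr : (orderOf a).Coprime (r - 1))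
    (i : ℕ) : ∃ t : ℕ, a ^ t * b * (a ^ t)⁻¹ = b * a ^ i := by
  set t := (((r : ZMod (orderOf a)) - 1)⁻¹ * i).val with ht
  have htr : a ^ (t * r) = a ^ (i + t) := by
    rw [pow_eq_pow_iff_natCast_eq]
    push_cast [ht, ZMod.natCast_zmod_val]
    linear_combination (i : ZMod (orderOf a)) * ZMod.inv_mul_of_unit _ (isUnit_natCast_sub_one hr)
  refine ⟨t, ?_⟩
  have := pow_mul_pow_eq h t 1
  rw [pow_one, pow_one, htr, pow_add] at this
  rw [this, ← mul_assoc, mul_inv_cancel_right]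

theorem exists_eq_conj (hG : IsZMPair a b r) (hr : (orderOf a).Coprime (r - 1))
    (hd : orderOf (r : ZMod (orderOf a)) = orderOf b)
    (htot : orderOf (r : ZMod (orderOf a)) = (orderOf a).totient) (φ : G ≃* G) :
    ∃ g : G, φ = MulAut.conj g := by
  obtain ⟨u, hu⟩ := exists_apply_a_eq_pow hG φ
  obtain ⟨i, hi⟩ := exists_apply_b_eq_mul_pow hG hd φ
  obtain ⟨k, hk⟩ := (orderOf_eq_totient_iff (isUnit_natCast hG.conj)).mp htot u
  obtain ⟨t, ht⟩ := exists_pow_conj_eq_mul_pow hG.conj hr i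
  have hak : (b ^ k)⁻¹ * a * b ^ k = a ^ (u : ZMod (orderOf a)).val := by
    have := inv_pow_mul_pow_mul_pow hG.conj 1 k
    rw [pow_one, one_mul] at this
    rw [this, pow_eq_pow_iff_natCast_eq]
    push_cast [ZMod.natCast_zmod_val]
    exact hk
  refine ⟨a ^ t * (b ^ k)⁻¹, ext_of_closure_pair hG.closure_eq_top ?_ ?_⟩
  · calc φ a = a ^ t * a ^ (u : ZMod (orderOf a)).val * (a ^ t)⁻¹ := by
          rw [hu, (Commute.pow_pow_self a t _).eq, mul_inv_cancel_right]
      _ = MulAut.conj (a ^ t * (b ^ k)⁻¹) a := by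
          rw [← hak, MulAut.conj_apply]
          group
  · rw [hi, MulAut.conj_apply, ← ht]
    group

noncomputable def powAut (hG : IsZMPair a b r) (u : (ZMod (orderOf a))ˣ) : G ≃* G where
  toEquiv := ((coordEquiv hG).symm.trans ((Equiv.refl _).prodCongr (Units.mulLeft u))).trans
    (coordEquiv hG)
  map_mul' x y := by
    obtain ⟨p, rfl⟩ := (coordEquiv hG).surjective x
    obtain ⟨q, rfl⟩ := (coordEquiv hG).surjective y
    rw [show coordEquiv hG p * coordEquiv hG q = coordEquiv hG _ from coord_mul hG.conj p q]
    simp only [Equiv.toFun_as_coe, Equiv.trans_apply, Equiv.symm_apply_apply,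
      Equiv.prodCongr_apply, Prod.map, Equiv.refl_apply, Units.mulLeft_apply]
    change coord a b _ = coord a b _ * coord a b _
    rw [coord_mul hG.conj]
    congr 2
    ring

theorem powAut_coord (hG : IsZMPair a b r) (u : (ZMod (orderOf a))ˣ)
    (p : ZMod (orderOf b) × ZMod (orderOf a)) :
    powAut hG u (coord a b p) = coord a b (p.1, u * p.2) := by
  change coordEquiv hG (Prod.map id (u * ·) ((coordEquiv hG).symm (coordEquiv hG p))) = _
  rw [Equiv.symm_apply_apply]
  rfl

theorem powAut_apply_a (hG : IsZMPair a b r) (u : (ZMod (orderOf a))ˣ) :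
    powAut hG u a = a ^ (u : ZMod (orderOf a)).val := by
  have := powAut_coord hG u (0, 1)
  rwa [coord_zero_one, mul_one, coord, ZMod.val_zero, pow_zero, one_mul] at this

theorem orderOf_natCast_eq_totient_of_forall_inner (hG : IsZMPair a b r)
    (hinn : ∀ φ : G ≃* G, ∃ g : G, φ = MulAut.conj g) :
    orderOf (r : ZMod (orderOf a)) = (orderOf a).totient := by
  refine (orderOf_eq_totient_iff (isUnit_natCast hG.conj)).mpr fun u => ?_
  obtain ⟨g, hg⟩ := hinn (powAut hG u⁻¹)
  obtain ⟨j, i, rfl⟩ := exists_eq_pow_mul_pow hG.conj hG.closure_eq_top g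
  have hconj := powAut_apply_a hG u⁻¹
  rw [hg, MulAut.conj_apply] at hconj
  have : a ^ (((u⁻¹ : (ZMod (orderOf a))ˣ) : ZMod (orderOf a)).val * r ^ j) = a ^ 1 := by
    rw [← inv_mul_pow_mul hG.conj i j, ← hconj]
    group
  rw [pow_eq_pow_iff_natCast_eq] at this
  push_cast [ZMod.natCast_zmod_val] at this
  exact ⟨j, (Units.inv_mul_eq_one.mp this).symm⟩

end Finite

end ZM

theorem ZM_complete_iff_general
    {G : Type*} [Group G] [Finite G] (m n r : ℕ) (a b : G)
    (ha : orderOf a = m) (hb : orderOf b = n)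
    (hconj : b⁻¹ * a * b = a ^ r)
    (hgen : Subgroup.closure {a, b} = ⊤)
    (hmn : Nat.Coprime m n) (hmr : Nat.Coprime m (r - 1))
    (d : ℕ) (hd : d = orderOf (r : ZMod m)) :
    (Subgroup.center G = ⊥ ∧ ∀ φ : G ≃* G, ∃ g : G, φ = MulAut.conj g) ↔
      (Nat.totient m = n ∧ n = d) := by
  subst ha hb hd
  have hG : ZM.IsZMPair a b r := ⟨hconj, hmn, hgen⟩
  constructor
  · rintro ⟨hZ, hinn⟩
    have hnd := ZM.orderOf_eq_orderOf_natCast_of_center_eq_bot hconj hgen hZ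
    exact ⟨(ZM.orderOf_natCast_eq_totient_of_forall_inner hG hinn).symm.trans hnd.symm, hnd⟩
  · rintro ⟨htot, hnd⟩
    exact ⟨ZM.center_eq_bot hconj hgen hmr hnd.symm,
      ZM.exists_eq_conj hG hmr hnd.symm (hnd.symm.trans htot.symm)⟩

theorem ZM_complete_iff
    {G : Type*} [Group G] [Finite G] (m n r : ℕ) (a b : G)
    (hm : 0 < m) (hn : 0 < n) (hr : 0 < r)
    (ha : orderOf a = m) (hb : orderOf b = n)
    (hconj : b⁻¹ * a * b = a ^ r)
    (hgen : Subgroup.closure {a, b} = ⊤)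
    (hmn : Nat.Coprime m n) (hmr : Nat.Coprime m (r - 1))
    (hrn : r ^ n ≡ 1 [MOD m])
    (d : ℕ) (hd : d = orderOf (r : ZMod m)) :
    (Subgroup.center G = ⊥ ∧ ∀ φ : G ≃* G, ∃ g : G, φ = MulAut.conj g) ↔
      (Nat.totient m = n ∧ n = d) :=
  ZM_complete_iff_general m n r a b ha hb hconj hgen hmn hmr d hd
end

section
/- Let G = ZM(m,n,r) with gcd(m,n) = gcd(m, r−1) = 1 and r^n ≡ 1 (mod m), and let d = o_m(r). Then the center of G equals ⟨b^d⟩ and is cyclic of order n/d. -/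
theorem ZM_center
    {G : Type*} [Group G] [Finite G] (m n r : ℕ) (a b : G)
    (hm : 0 < m) (hn : 0 < n) (hr : 0 < r)
    (ha : orderOf a = m) (hb : orderOf b = n)
    (hconj : b⁻¹ * a * b = a ^ r)
    (hgen : Subgroup.closure {a, b} = ⊤)
    (hmn : Nat.Coprime m n) (hmr : Nat.Coprime m (r - 1))
    (hrn : r ^ n ≡ 1 [MOD m])
    (d : ℕ) (hd : d = orderOf (r : ZMod m)) :
    Subgroup.center G = Subgroup.zpowers (b ^ d) ∧
      IsCyclic (Subgroup.center G) ∧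
      Nat.card (Subgroup.center G) = n / d := by
  have ham : a ^ m = 1 := ha ▸ pow_orderOf_eq_one a
  have hbn : b ^ n = 1 := hb ▸ pow_orderOf_eq_one b
  -- basic commutation: a^k * b = b * a^(k*r)
  have habk : ∀ k : ℕ, a ^ k * b = b * a ^ (k * r) := by
    intro k
    induction k with
    | zero => simp
    | succ k ih =>
      have hab : a * b = b * a ^ r := by
        calc a * b = b * (b⁻¹ * a * b) := by group
        _ = b * a ^ r := by rw [hconj]
      calc a ^ (k + 1) * b = a * (a ^ k * b) := by rw [pow_succ']; group
      _ = a * (b * a ^ (k * r)) := by rw [ih]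
      _ = (a * b) * a ^ (k * r) := by group
      _ = b * (a ^ r * a ^ (k * r)) := by rw [hab]; group
      _ = b * a ^ ((k + 1) * r) := by rw [← pow_add]; ring_nf
  -- push-through: a^i * b^j = b^j * a^(i * r^j)
  have hpush : ∀ i j : ℕ, a ^ i * b ^ j = b ^ j * a ^ (i * r ^ j) := by
    intro i j
    induction j with
    | zero => simp
    | succ j ih =>
      calc a ^ i * b ^ (j + 1) = (a ^ i * b ^ j) * b := by rw [pow_succ]; group
      _ = b ^ j * (a ^ (i * r ^ j) * b) := by rw [ih]; group
      _ = b ^ j * (b * a ^ (i * r ^ j * r)) := by rw [habk]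
      _ = b ^ (j + 1) * a ^ (i * r ^ (j + 1)) := by rw [pow_succ, pow_succ]; group
  -- normal form: every element is b^j * a^i
  have hform : ∀ g : G, ∃ i j : ℕ, g = b ^ j * a ^ i := by
    intro g
    have hg : g ∈ Subgroup.closure ({a, b} : Set G) := by rw [hgen]; exact Subgroup.mem_top g
    induction hg using Subgroup.closure_induction with
    | mem x hx =>
      simp only [Set.mem_insert_iff, Set.mem_singleton_iff] at hx
      rcases hx with rfl | rfl
      · exact ⟨1, 0, by simp⟩
      · exact ⟨0, 1, by simp⟩
    | one => exact ⟨0, 0, by simp⟩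
    | mul x y hx hy ihx ihy =>
      obtain ⟨i, j, rfl⟩ := ihx
      obtain ⟨k, l, rfl⟩ := ihy
      refine ⟨i * r ^ l + k, j + l, ?_⟩
      calc (b ^ j * a ^ i) * (b ^ l * a ^ k)
          = b ^ j * (a ^ i * b ^ l) * a ^ k := by group
      _ = b ^ j * (b ^ l * a ^ (i * r ^ l)) * a ^ k := by rw [hpush]
      _ = b ^ (j + l) * a ^ (i * r ^ l + k) := by rw [pow_add, pow_add]; group
    | inv x hx ihx =>
      obtain ⟨i, j, rfl⟩ := ihx
      refine ⟨i * (m - 1) * r ^ (j * (n - 1)), j * (n - 1), ?_⟩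
      have key : (b ^ j * a ^ i) * (b ^ (j * (n - 1)) * a ^ (i * (m - 1) * r ^ (j * (n - 1)))) = 1 := by
        have h1 : a ^ (i * (m - 1)) * b ^ (j * (n - 1)) =
            b ^ (j * (n - 1)) * a ^ (i * (m - 1) * r ^ (j * (n - 1))) := hpush _ _
        calc (b ^ j * a ^ i) * (b ^ (j * (n - 1)) * a ^ (i * (m - 1) * r ^ (j * (n - 1))))
            = b ^ j * (a ^ i * (a ^ (i * (m - 1)) * b ^ (j * (n - 1)))) := by rw [← h1]; group
        _ = b ^ j * (a ^ (i + i * (m - 1)) * b ^ (j * (n - 1))) := by rw [pow_add]; group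
        _ = b ^ j * (a ^ (i * m) * b ^ (j * (n - 1))) := by
              congr 2
              have h2 : i + i * (m - 1) = i * ((m - 1) + 1) := by ring
              have h3 : m - 1 + 1 = m := by omega
              rw [h2, h3]
        _ = b ^ j * b ^ (j * (n - 1)) := by rw [pow_mul', ham]; simp
        _ = b ^ (j * n) := by
              rw [← pow_add]
              congr 1
              have h2 : j + j * (n - 1) = j * ((n - 1) + 1) := by ring
              have h3 : n - 1 + 1 = n := by omega
              rw [h2, h3]
        _ = 1 := by rw [pow_mul', hbn, one_pow]
      exact inv_eq_of_mul_eq_one_right key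
  -- d divides n
  have hrnz : ((r : ZMod m)) ^ n = 1 := by
    have := (ZMod.natCast_eq_natCast_iff _ _ _).mpr hrn
    push_cast at this
    exact this
  have hdn : d ∣ n := hd ▸ orderOf_dvd_of_pow_eq_one hrnz
  have hrd : r ^ d ≡ 1 [MOD m] := by
    have : ((r : ZMod m)) ^ d = 1 := hd ▸ pow_orderOf_eq_one _
    have h2 : ((r ^ d : ℕ) : ZMod m) = ((1 : ℕ) : ZMod m) := by push_cast; simpa using this
    exact (ZMod.natCast_eq_natCast_iff _ _ _).mp h2
  -- a^(i * r^d) = a^i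
  have hfix : ∀ i : ℕ, a ^ (i * r ^ d) = a ^ i := by
    intro i
    rw [pow_eq_pow_iff_modEq, ha]
    simpa using (hrd.mul_left i)
  -- b^d is central
  have hbd : (b ^ d) ∈ Subgroup.center G := by
    rw [Subgroup.mem_center_iff]
    intro g
    obtain ⟨i, j, rfl⟩ := hform g
    calc (b ^ j * a ^ i) * b ^ d = b ^ j * (b ^ d * a ^ (i * r ^ d)) := by rw [← hpush]; group
    _ = b ^ j * (b ^ d * a ^ i) := by rw [hfix]
    _ = b ^ d * (b ^ j * a ^ i) := by
          have : b ^ j * b ^ d = b ^ d * b ^ j := by rw [← pow_add, ← pow_add, Nat.add_comm]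
          rw [← mul_assoc, this]; group
  -- center = zpowers (b^d)
  have hcenter : Subgroup.center G = Subgroup.zpowers (b ^ d) := by
    apply le_antisymm
    · intro z hz
      obtain ⟨i, j, rfl⟩ := hform z
      -- commuting with b kills a^i
      have hzb : (b ^ j * a ^ i) * b = b * (b ^ j * a ^ i) :=
        (Subgroup.mem_center_iff.mp hz b).symm
      have h1 : b ^ (j + 1) * a ^ (i * r) = b ^ (j + 1) * a ^ i := by
        calc b ^ (j + 1) * a ^ (i * r) = b ^ j * (a ^ i * b ^ 1) := by
              rw [hpush]; rw [pow_succ]; simp [mul_assoc, pow_one]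
        _ = (b ^ j * a ^ i) * b := by simp [mul_assoc]
        _ = b * (b ^ j * a ^ i) := hzb
        _ = b ^ (j + 1) * a ^ i := by rw [pow_succ']; group
      have h2 : i * r ≡ i [MOD m] := by
        have := mul_left_cancel h1
        rwa [pow_eq_pow_iff_modEq, ha] at this
      have hmi : m ∣ i := by
        have hile : i ≤ i * r := Nat.le_mul_of_pos_right i hr
        have hdvd : m ∣ i * r - i := (Nat.modEq_iff_dvd' hile).mp h2.symm
        have heq : i * r - i = i * (r - 1) := by
          have hr1 : r = (r - 1) + 1 := (Nat.succ_pred_eq_of_pos hr).symm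
          calc i * r - i = i * ((r - 1) + 1) - i := by rw [← hr1]
          _ = i * (r - 1) + i - i := by ring_nf
          _ = i * (r - 1) := by omega
        exact hmr.dvd_of_dvd_mul_right (heq ▸ hdvd)
      have hai : a ^ i = 1 := orderOf_dvd_iff_pow_eq_one.mp (ha ▸ hmi)
      -- commuting with a forces d ∣ j
      have hza : (b ^ j * a ^ i) * a = a * (b ^ j * a ^ i) :=
        (Subgroup.mem_center_iff.mp hz a).symm
      have h3 : b ^ j * a ^ (i + 1) = b ^ j * a ^ (r ^ j + i) := by
        calc b ^ j * a ^ (i + 1) = (b ^ j * a ^ i) * a := by rw [pow_add]; group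
        _ = a * (b ^ j * a ^ i) := hza
        _ = (a ^ 1 * b ^ j) * a ^ i := by group
        _ = b ^ j * a ^ (1 * r ^ j) * a ^ i := by rw [hpush]
        _ = b ^ j * a ^ (r ^ j + i) := by rw [one_mul, pow_add]; group
      have h4 : i + 1 ≡ r ^ j + i [MOD m] := by
        have := mul_left_cancel h3
        rwa [pow_eq_pow_iff_modEq, ha] at this
      have h5 : r ^ j ≡ 1 [MOD m] := by
        rw [Nat.add_comm i 1] at h4
        exact (Nat.ModEq.add_right_cancel' i h4).symm
      have hdj : d ∣ j := by
        rw [hd]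
        apply orderOf_dvd_of_pow_eq_one
        have h6 : ((r ^ j : ℕ) : ZMod m) = ((1 : ℕ) : ZMod m) :=
          (ZMod.natCast_eq_natCast_iff _ _ _).mpr h5
        push_cast at h6
        exact h6
      obtain ⟨k, rfl⟩ := hdj
      rw [hai, mul_one]
      exact Subgroup.mem_zpowers_iff.mpr ⟨(k : ℤ), by rw [zpow_natCast, ← pow_mul]⟩
    · exact Subgroup.zpowers_le.mpr hbd
  refine ⟨hcenter, ?_, ?_⟩
  · rw [hcenter]
    refine ⟨⟨⟨b ^ d, Subgroup.mem_zpowers _⟩, fun x => ?_⟩⟩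
    obtain ⟨k, hk⟩ := x.2
    exact ⟨k, Subtype.ext (by rw [SubgroupClass.coe_zpow]; exact hk)⟩
  · rw [hcenter, Nat.card_zpowers, orderOf_pow, hb, Nat.gcd_comm, Nat.gcd_eq_left hdn]
end

section
/- Every finite cyclic group C_N is the absolute center of some finite group, i.e. for every positive integer N there exists a finite group H with L(H) ≅ C_N. -/
/-- The absolute center of a group: the set of elements fixed by every automorphism. -/
def absoluteCenter (G : Type*) [Group G] : Subgroup G where
  carrier := {g | ∀ φ : G ≃* G, φ g = g}
  one_mem' := fun φ => map_one φ
  mul_mem' := fun {x y} hx hy φ => by rw [map_mul, hx φ, hy φ]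
  inv_mem' := fun {x} hx φ => by rw [map_inv, hx φ]

/-!
For `N ≥ 2` take a prime `p ≡ 1 mod N`, a unit `r` of `ZMod p` of order `N`, and
`G = C_p ⋊ C_{N²}`, the generator `b` of `C_{N²}` acting on `C_p = ⟨a⟩` by `a ↦ a ^ r`.
The center of `G` is `⟨b ^ N⟩`, of order `N`, and the absolute center lies in the center.
Conversely, since `p ∤ N²` an automorphism `φ` maps `C_p` into itself, so `φ b` still acts on
`C_p` by `r`, i.e. `φ b = a ^ u * b ^ m` with `m ≡ 1 mod N`. Hence
`(φ b) ^ N = a ^ (u * (1 + r + ⋯ + r ^ (N - 1))) * b ^ (m * N) = b ^ N`: the geometric sum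
vanishes because `r ≠ 1` is an `N`-th root of unity, and `m * N ≡ N mod N²`.
For `N = 1` the trivial group works.
-/

open Multiplicative Subgroup Finset

theorem absoluteCenter_le_center (G : Type*) [Group G] : absoluteCenter G ≤ center G :=
  fun _ hg => Subgroup.mem_center_iff.mpr fun h => mul_inv_eq_iff_eq_mul.mp (hg (MulAut.conj h))

namespace SemidirectProduct

variable {N G : Type*}

section

variable [Group N] [Group G] {φ : G →* MulAut N}

instance [Fintype N] [Fintype G] : Fintype (N ⋊[φ] G) :=
  Fintype.ofEquiv _ equivProd.symm

theorem right_pow (g : N ⋊[φ] G) (k : ℕ) : (g ^ k).right = g.right ^ k :=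
  map_pow rightHom g k

theorem right_eq_one_of_pow_eq_one {n m : ℕ} (hnm : n.Coprime m) (hG : ∀ q : G, q ^ m = 1)
    {g : N ⋊[φ] G} (hg : g ^ n = 1) : g.right = 1 :=
  (pow_eq_one_iff_of_coprime hnm).mp ⟨by rw [← right_pow, hg, one_right], hG _⟩

end

section

variable [CommGroup N] [Group G] {φ : G →* MulAut N}

theorem conj_inl (g : N ⋊[φ] G) (n : N) : g * inl n * g⁻¹ = inl (φ g.right n) := by
  ext
  · simp [mul_left, inv_left, mul_right, left_inl, right_inl]
  · simp [mul_right, inv_right, right_inl]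

theorem left_pow (g : N ⋊[φ] G) (k : ℕ) :
    (g ^ k).left = ∏ i ∈ range k, φ (g.right ^ i) g.left := by
  induction k with
  | zero => rfl
  | succ k ih => rw [pow_succ, mul_left, ih, right_pow, prod_range_succ]

end

theorem mem_center_iff [CommGroup N] [CommGroup G] {φ : G →* MulAut N} {g : N ⋊[φ] G} :
    g ∈ center (N ⋊[φ] G) ↔ φ g.right = 1 ∧ ∀ q, φ q g.left = g.left := by
  rw [Subgroup.mem_center_iff]
  constructor
  · intro h
    refine ⟨MulEquiv.ext fun n => inl_injective (?_ : (inl (φ g.right n) : N ⋊[φ] G) = inl n),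
      fun q => ?_⟩
    · rw [← conj_inl, ← h, mul_inv_cancel_right]
    · simpa [mul_left] using congrArg left (h (inr q))
  · rintro ⟨hright, hleft⟩ h
    ext
    · simp [mul_left, hright, hleft, mul_comm]
    · simp [mul_right, mul_comm]

end SemidirectProduct

section UnitsMulAut

variable (R : Type*) [Ring R]

def unitsMulAut : Rˣ →* MulAut (Multiplicative R) :=
  (MulAutMultiplicative R).symm.toMonoidHom.comp (DistribMulAction.toAddAut Rˣ R)

variable {R}

theorem unitsMulAut_apply (u : Rˣ) (x : Multiplicative R) :
    unitsMulAut R u x = ofAdd (u * x.toAdd) :=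
  rfl

end UnitsMulAut

namespace Metacyclic

variable {p : ℕ} (r : (ZMod p)ˣ)

instance [NeZero p] : NeZero (orderOf r ^ 2) := ⟨pow_ne_zero 2 (orderOf_pos r).ne'⟩

noncomputable def powHom : Multiplicative (ZMod (orderOf r ^ 2)) →* (ZMod p)ˣ :=
  AddMonoidHom.toMultiplicativeLeft <| ZMod.lift _
    ⟨zmultiplesHom _ (Additive.ofMul r), by
      simp [← ofMul_zpow, pow_two, zpow_mul, pow_orderOf_eq_one]⟩

noncomputable def action :
    Multiplicative (ZMod (orderOf r ^ 2)) →* MulAut (Multiplicative (ZMod p)) :=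
  (unitsMulAut (ZMod p)).comp (powHom r)

end Metacyclic

/-- The group `ZM(p, o(r)², r)` of the paper: `C_p ⋊ C_{o(r)²}`, the generator of `C_{o(r)²}`
acting on `C_p` by multiplication by `r` (in additive notation). -/
abbrev Metacyclic {p : ℕ} (r : (ZMod p)ˣ) :=
  Multiplicative (ZMod p) ⋊[Metacyclic.action r] Multiplicative (ZMod (orderOf r ^ 2))

namespace Metacyclic

open SemidirectProduct

variable {p : ℕ} {r : (ZMod p)ˣ}

theorem action_apply (y : Multiplicative (ZMod (orderOf r ^ 2))) (x : Multiplicative (ZMod p)) :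
    action r y x = ofAdd (powHom r y * x.toAdd) :=
  rfl

theorem powHom_ofAdd_intCast (k : ℤ) : powHom r (ofAdd (k : ZMod (orderOf r ^ 2))) = r ^ k := by
  simp [powHom, ZMod.lift_coe]

theorem powHom_ofAdd_one : powHom r (ofAdd 1) = r := by
  simpa using powHom_ofAdd_intCast (r := r) 1

theorem mem_zpowers_of_powHom_eq_one {y : Multiplicative (ZMod (orderOf r ^ 2))}
    (hy : powHom r y = 1) : y ∈ zpowers (ofAdd (orderOf r : ZMod (orderOf r ^ 2))) := by
  obtain ⟨k, rfl⟩ : ∃ k : ℤ, ofAdd (k : ZMod (orderOf r ^ 2)) = y := ⟨(toAdd y).cast, by simp⟩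
  rw [powHom_ofAdd_intCast, ← orderOf_dvd_iff_zpow_eq_one] at hy
  obtain ⟨s, rfl⟩ := hy
  exact ⟨s, by simp [← ofAdd_zsmul, mul_comm]⟩

theorem pow_orderOf_eq_of_powHom_eq {y : Multiplicative (ZMod (orderOf r ^ 2))}
    (hy : powHom r y = r) : y ^ orderOf r = ofAdd (orderOf r : ZMod (orderOf r ^ 2)) := by
  have hker : powHom r (y * (ofAdd 1)⁻¹) = 1 := by
    rw [map_mul, map_inv, hy, powHom_ofAdd_one, mul_inv_cancel]
  obtain ⟨s, hs⟩ := mem_zpowers_of_powHom_eq_one hker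
  have hN : (ofAdd (orderOf r : ZMod (orderOf r ^ 2))) ^ orderOf r = 1 := by
    rw [← ofAdd_nsmul, nsmul_eq_mul, ← sq, ← Nat.cast_pow, ZMod.natCast_self, ofAdd_zero]
  have : (y * (ofAdd 1)⁻¹) ^ orderOf r = 1 := by
    rw [← hs, ← zpow_natCast, ← zpow_mul, mul_comm, zpow_mul, zpow_natCast, hN, one_zpow]
  rw [mul_pow, inv_pow, mul_inv_eq_one] at this
  simpa [← ofAdd_nsmul] using this

variable [hp : Fact p.Prime]

theorem center_le (hr : r ≠ 1) :
    center (Metacyclic r) ≤ zpowers (inr (ofAdd (orderOf r : ZMod (orderOf r ^ 2)))) := by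
  intro g hg
  obtain ⟨hright, hleft⟩ := SemidirectProduct.mem_center_iff.mp hg
  have hy : powHom r g.right = 1 := by
    have := congrArg toAdd (DFunLike.congr_fun hright (ofAdd 1))
    rw [action_apply] at this
    exact Units.ext (by simpa using this)
  have hx : g.left = 1 := by
    have := congrArg toAdd (hleft (ofAdd 1))
    rw [action_apply, powHom_ofAdd_one, toAdd_ofAdd] at this
    have hr' : (r : ZMod p) - 1 ≠ 0 := sub_ne_zero.mpr fun h => hr (Units.ext h)
    have : ((r : ZMod p) - 1) * toAdd g.left = 0 := by linear_combination this
    simpa [hr'] using this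
  rw [← inl_left_mul_inr_right g, hx, map_one, one_mul, ← MonoidHom.map_zpowers]
  exact mem_map_of_mem _ (mem_zpowers_of_powHom_eq_one hy)

theorem right_map_inl_eq_one (φ : Metacyclic r ≃* Metacyclic r) (x : Multiplicative (ZMod p)) :
    (φ (inl x)).right = 1 := by
  have hlt : orderOf r < p :=
    (orderOf_le_card_univ.trans_eq (ZMod.card_units p)).trans_lt (Nat.sub_lt hp.out.pos one_pos)
  refine right_eq_one_of_pow_eq_one
    ((Nat.coprime_of_lt_prime (orderOf_pos r).ne' hlt hp.out).pow_right 2) (fun q => ?_) ?_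
  · rw [← ofAdd_toAdd q, ← ofAdd_nsmul, ZModModule.char_nsmul_eq_zero, ofAdd_zero]
  · rw [← map_pow, ← map_pow, ← ofAdd_toAdd x, ← ofAdd_nsmul, ZModModule.char_nsmul_eq_zero,
      ofAdd_zero, map_one, map_one]

theorem powHom_right_map_inr_one (φ : Metacyclic r ≃* Metacyclic r) :
    powHom r (φ (inr (ofAdd 1))).right = r := by
  set c := (φ (inl (ofAdd 1))).left
  have hφa : φ (inl (ofAdd 1)) = inl c := by
    rw [← inl_left_mul_inr_right (φ _), right_map_inl_eq_one, inr.map_one, mul_one]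
  have hc : toAdd c ≠ 0 := by
    intro h
    have : φ (inl (ofAdd 1)) = φ 1 := by
      rw [hφa, map_one, ← ofAdd_toAdd c, h, ofAdd_zero, map_one]
    exact one_ne_zero (congrArg toAdd (inl_injective (φ.injective this)))
  have hrel : inr (ofAdd 1) * inl (ofAdd 1) * (inr (ofAdd 1))⁻¹ =
      (inl (ofAdd 1) : Metacyclic r) ^ (r : ZMod p).val := by
    rw [conj_inl, ← map_pow, ← ofAdd_nsmul, nsmul_one, ZMod.natCast_zmod_val]
    simp [action_apply, powHom_ofAdd_one]
  have := congrArg φ hrel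
  rw [map_mul, map_mul, map_inv, map_pow, hφa, conj_inl, ← map_pow, inl_inj] at this
  have := congrArg toAdd this
  rw [action_apply, ← ofAdd_toAdd c, ← ofAdd_nsmul] at this
  simp only [toAdd_ofAdd, nsmul_eq_mul, ZMod.natCast_zmod_val] at this
  exact Units.ext (mul_right_cancel₀ hc this)

theorem inr_mem_absoluteCenter (hr : r ≠ 1) :
    inr (ofAdd (orderOf r : ZMod (orderOf r ^ 2))) ∈ absoluteCenter (Metacyclic r) := by
  intro φ
  have hb : (inr (ofAdd 1) : Metacyclic r) ^ orderOf r = inr (ofAdd (orderOf r : ZMod _)) := by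
    rw [← map_pow, ← ofAdd_nsmul, nsmul_one]
  have hg := powHom_right_map_inr_one φ
  have hgeom : ∑ i ∈ range (orderOf r), (r : ZMod p) ^ i = 0 :=
    (IsPrimitiveRoot.coe_units_iff.mpr (IsPrimitiveRoot.orderOf r)).geom_sum_eq_zero
      (Nat.one_lt_iff_ne_zero_and_ne_one.mpr ⟨(orderOf_pos r).ne', orderOf_eq_one_iff.not.mpr hr⟩)
  rw [← hb, map_pow, hb]
  ext
  · rw [left_pow, ← ofAdd_toAdd (∏ i ∈ _, _), toAdd_prod]
    simp only [action_apply]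
    simp only [map_pow, hg, toAdd_ofAdd, Units.val_pow_eq_pow_val, ← sum_mul, hgeom, zero_mul]
    rfl
  · rw [right_pow, pow_orderOf_eq_of_powHom_eq hg]
    rfl

theorem absoluteCenter_eq (hr : r ≠ 1) :
    absoluteCenter (Metacyclic r) = zpowers (inr (ofAdd (orderOf r : ZMod (orderOf r ^ 2)))) :=
  le_antisymm ((absoluteCenter_le_center _).trans (center_le hr))
    (zpowers_le.mpr (inr_mem_absoluteCenter hr))

theorem orderOf_inr_ofAdd_orderOf :
    orderOf (inr (ofAdd (orderOf r : ZMod (orderOf r ^ 2))) : Metacyclic r) = orderOf r := by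
  rw [orderOf_injective inr inr_injective, orderOf_ofAdd_eq_addOrderOf,
    ZMod.addOrderOf_coe _ (NeZero.ne _), Nat.gcd_eq_right (dvd_pow_self _ two_ne_zero),
    sq, Nat.mul_div_cancel _ (orderOf_pos r)]

noncomputable def absoluteCenterEquiv (hr : r ≠ 1) :
    absoluteCenter (Metacyclic r) ≃* Multiplicative (ZMod (orderOf r)) :=
  (MulEquiv.subgroupCongr (absoluteCenter_eq hr)).trans <|
    mulEquivOfCyclicCardEq <| by
      rw [Nat.card_zpowers, orderOf_inr_ofAdd_orderOf, Nat.card_congr toAdd, Nat.card_zmod]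

end Metacyclic

theorem exists_zmod_unit_orderOf_eq {N : ℕ} (hN : N ≠ 0) :
    ∃ p, ∃ _ : Fact p.Prime, ∃ r : (ZMod p)ˣ, orderOf r = N := by
  obtain ⟨p, hp, -, hmod⟩ := Nat.exists_prime_gt_modEq_one 0 hN
  have : Fact p.Prime := ⟨hp⟩
  obtain ⟨g, hg⟩ := IsCyclic.exists_ofOrder_eq_natCard (α := (ZMod p)ˣ)
  have hdvd : N ∣ orderOf g := by
    rw [hg, Nat.card_eq_fintype_card, ZMod.card_units]
    exact (Nat.modEq_iff_dvd' hp.one_lt.le).mp hmod.symm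
  exact ⟨p, this, _, orderOf_pow_orderOf_div (orderOf_pos g).ne' hdvd⟩

theorem cyclic_completely_L_realisable_exists (N : ℕ) (hN : 0 < N) :
    ∃ (H : Type) (_ : Group H) (_ : Fintype H),
      Nonempty (absoluteCenter H ≃* Multiplicative (ZMod N)) := by
  rcases (Nat.one_le_iff_ne_zero.mpr hN.ne').eq_or_lt with rfl | hN1
  · let := uniqueOfSubsingleton (1 : absoluteCenter Unit)
    exact ⟨Unit, inferInstance, inferInstance, ⟨MulEquiv.ofUnique⟩⟩
  obtain ⟨p, _, r, rfl⟩ := exists_zmod_unit_orderOf_eq hN.ne'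
  have hr : r ≠ 1 := by
    rintro rfl
    rw [orderOf_one] at hN1
    exact hN1.false
  exact ⟨Metacyclic r, inferInstance, inferInstance, ⟨Metacyclic.absoluteCenterEquiv hr⟩⟩
end

section
/- Every normal subgroup of a ZM-group (a finite group all of whose Sylow subgroups are cyclic) is a characteristic subgroup. -/
private lemma zm_inf_bot {G : Type*} [Group G] [Finite G]
    (hsyl : ∀ (p : ℕ), p.Prime → ∀ P : Sylow p G, IsCyclic P)
    {N M : Subgroup G} (hN : N.Normal) (hM : M.Normal)
    (hinf : N ⊓ M = ⊥) (hcard : Nat.card N = Nat.card M) : N = ⊥ := by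
  by_contra hbot
  have h1 : 1 < Nat.card N := (Subgroup.one_lt_card_iff_ne_bot N).mpr hbot
  obtain ⟨p, hp, hpdvd⟩ := Nat.exists_prime_and_dvd (n := Nat.card N) (by omega)
  haveI : Fact p.Prime := ⟨hp⟩
  obtain ⟨x₀, hx₀⟩ := exists_prime_orderOf_dvd_card' (G := N) p hpdvd
  obtain ⟨y₀, hy₀⟩ := exists_prime_orderOf_dvd_card' (G := M) p (hcard ▸ hpdvd)
  set x : G := (x₀ : G) with hxdef
  set y : G := (y₀ : G) with hydef
  have hxN : x ∈ N := x₀.2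
  have hyM : y ∈ M := y₀.2
  have hxord : orderOf x = p := by rw [hxdef, Subgroup.orderOf_coe]; exact hx₀
  have hyord : orderOf y = p := by rw [hydef, Subgroup.orderOf_coe]; exact hy₀
  -- x and y commute
  have hcomm : Commute x y := by
    have hmem : x * y * x⁻¹ * y⁻¹ ∈ N ⊓ M := by
      constructor
      · have : y * x⁻¹ * y⁻¹ ∈ N := hN.conj_mem _ (N.inv_mem hxN) y
        have := N.mul_mem hxN this
        simpa [mul_assoc] using this
      · have : x * y * x⁻¹ ∈ M := hM.conj_mem _ hyM x
        exact M.mul_mem this (M.inv_mem hyM)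
    rw [hinf, Subgroup.mem_bot] at hmem
    have := mul_eq_one_iff_eq_inv.mp hmem
    rw [Commute, SemiconjBy]
    group at this ⊢
    calc x * y = (x * y * x⁻¹ * y⁻¹) * (y * x) := by group
    _ = y * x := by rw [hmem]; group
  -- build the p-subgroup generated by x and y
  have hcomm' : ∀ (a b : Multiplicative ℤ), Commute (zpowersHom G x a) (zpowersHom G y b) :=
    fun a b => (hcomm.zpow_zpow _ _)
  set f := MonoidHom.noncommCoprod (zpowersHom G x) (zpowersHom G y) hcomm' with hf
  set H := f.range with hH
  have hxp : x ^ p = 1 := by rw [← hxord]; exact pow_orderOf_eq_one x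
  have hyp : y ^ p = 1 := by rw [← hyord]; exact pow_orderOf_eq_one y
  have hpow : ∀ g ∈ H, g ^ p = 1 := by
    rintro g ⟨⟨a, b⟩, rfl⟩
    have : f (a, b) = x ^ a.toAdd * y ^ b.toAdd := rfl
    rw [this, (hcomm.zpow_zpow _ _).mul_pow, ← zpow_natCast (x ^ a.toAdd),
      ← zpow_natCast (y ^ b.toAdd), ← zpow_mul, ← zpow_mul, mul_comm a.toAdd,
      mul_comm b.toAdd, zpow_mul, zpow_mul, zpow_natCast, zpow_natCast, hxp, hyp]
    simp
  have hHp : IsPGroup p H := by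
    intro g
    exact ⟨1, by ext; simpa [pow_succ] using hpow g g.2⟩
  obtain ⟨P, hHP⟩ := hHp.exists_le_sylow
  haveI : IsCyclic P := hsyl p hp P
  haveI : IsCyclic (H.subgroupOf P) := Subgroup.isCyclic _
  have hHcyc : IsCyclic H :=
    isCyclic_of_surjective _ (Subgroup.subgroupOfEquivOfLe hHP).surjective
  obtain ⟨g, hg⟩ := hHcyc.exists_generator
  have hgord : orderOf g = Nat.card H := orderOf_eq_card_of_forall_mem_zpowers hg
  have hgp : g ^ p = 1 := by ext; simpa using hpow (g : G) g.2
  have hcardH : Nat.card H ∣ p := hgord ▸ orderOf_dvd_of_pow_eq_one hgp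
  -- x and y are in H
  have hxH : x ∈ H := ⟨(Multiplicative.ofAdd 1, 1), by simp [f]⟩
  have hyH : y ∈ H := ⟨(1, Multiplicative.ofAdd 1), by simp [f]⟩
  have hzx : Subgroup.zpowers x ≤ H := by
    rw [Subgroup.zpowers_le]; exact hxH
  have hcardzx : Nat.card (Subgroup.zpowers x) = p := by
    rw [Nat.card_zpowers, hxord]
  have hcardH' : Nat.card H = p :=
    Nat.dvd_antisymm hcardH (hcardzx ▸ Subgroup.card_dvd_of_le hzx)
  have hEq : Subgroup.zpowers x = H :=
    Subgroup.eq_of_le_of_card_ge hzx (by rw [hcardzx, hcardH'])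
  have hyN : y ∈ N := (Subgroup.zpowers_le.mpr hxN) (hEq ▸ hyH)
  have : y ∈ N ⊓ M := ⟨hyN, hyM⟩
  rw [hinf, Subgroup.mem_bot] at this
  rw [this, orderOf_one] at hyord
  exact absurd hyord hp.one_lt.ne

private lemma zm_unique_normal : ∀ (n : ℕ) (G : Type u) [Group G] [Finite G],
    Nat.card G = n →
    (∀ (p : ℕ), p.Prime → ∀ P : Sylow p G, IsCyclic P) →
    ∀ N M : Subgroup G, N.Normal → M.Normal → Nat.card N = Nat.card M → N = M := by
  intro n
  induction n using Nat.strong_induction_on with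
  | _ n ih =>
    intro G _ _ hn hsyl N M hN hM hcard
    rcases eq_or_ne (N ⊓ M) ⊥ with hinf | hinf
    · have h1 : N = ⊥ := zm_inf_bot hsyl hN hM hinf hcard
      have h2 : M = ⊥ := zm_inf_bot hsyl hM hN (by rw [inf_comm, hinf]) hcard.symm
      rw [h1, h2]
    · -- pass to the quotient by I = N ⊓ M
      set I := N ⊓ M with hI
      haveI hInorm : I.Normal := @Subgroup.normal_inf_normal _ _ N M hN hM
      have hIN : I ≤ N := inf_le_left
      have hIM : I ≤ M := inf_le_right
      haveI : IsZGroup G := ⟨hsyl⟩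
      have hGI : Nat.card (G ⧸ I) < n := by
        rw [← hn, Subgroup.card_eq_card_quotient_mul_card_subgroup I]
        have := (Subgroup.one_lt_card_iff_ne_bot I).mpr hinf
        have hq : 0 < Nat.card (G ⧸ I) := Nat.card_pos
        nlinarith
      set π := QuotientGroup.mk' I with hπ
      have hcardmap : ∀ (K : Subgroup G), I ≤ K →
          Nat.card (K.map π) * Nat.card I = Nat.card K := by
        intro K hIK
        have h1 : (π.comp K.subtype).range = K.map π := by
          rw [MonoidHom.range_comp, Subgroup.range_subtype]
        have h2 : (π.comp K.subtype).ker = I.subgroupOf K := by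
          rw [← MonoidHom.comap_ker, QuotientGroup.ker_mk']; rfl
        have h3 := Subgroup.card_eq_card_quotient_mul_card_subgroup (π.comp K.subtype).ker
        have h4 : Nat.card (K ⧸ (π.comp K.subtype).ker) = Nat.card (K.map π) := by
          rw [← h1]; exact Nat.card_congr (QuotientGroup.quotientKerEquivRange _).toEquiv
        have h5 : Nat.card (I.subgroupOf K) = Nat.card I :=
          Nat.card_congr (Subgroup.subgroupOfEquivOfLe hIK).toEquiv
        rw [h4, h2, h5] at h3
        exact h3.symm
      have hNM' : Nat.card (N.map π) = Nat.card (M.map π) := by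
        have h1 := hcardmap N hIN
        have h2 := hcardmap M hIM
        have hIpos : 0 < Nat.card I := Nat.card_pos
        rw [← hcard, ← h1] at h2
        exact (Nat.eq_of_mul_eq_mul_right hIpos h2.symm)
      have hmapeq : N.map π = M.map π := by
        refine ih _ hGI (G ⧸ I) rfl (IsZGroup.isZGroup) _ _ ?_ ?_ hNM'
        · exact Subgroup.Normal.map hN π (QuotientGroup.mk'_surjective I)
        · exact Subgroup.Normal.map hM π (QuotientGroup.mk'_surjective I)
      have hcomap : ∀ (K : Subgroup G), I ≤ K → (K.map π).comap π = K := by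
        intro K hIK
        rw [Subgroup.comap_map_eq, QuotientGroup.ker_mk', sup_eq_left.mpr hIK]
      calc N = (N.map π).comap π := (hcomap N hIN).symm
        _ = (M.map π).comap π := by rw [hmapeq]
        _ = M := hcomap M hIM

theorem normal_characteristic_of_all_sylow_cyclic (G : Type*) [Group G] [Finite G]
    (hsyl : ∀ (p : ℕ), p.Prime → ∀ P : Sylow p G, IsCyclic P)
    (K : Subgroup G) (hK : K.Normal) : K.Characteristic := by
  rw [Subgroup.characteristic_iff_map_eq]
  intro φ
  have hnorm : (K.map φ.toMonoidHom).Normal :=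
    Subgroup.Normal.map hK φ.toMonoidHom φ.surjective
  have hcard : Nat.card (K.map φ.toMonoidHom) = Nat.card K :=
    Nat.card_congr (Subgroup.equivMapOfInjective K φ.toMonoidHom φ.injective).toEquiv.symm
  exact zm_unique_normal (Nat.card G) G rfl hsyl _ _ hnorm hK hcard
end
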